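/- An L_[→]-formula A is provable in FR_[→] if and only if it is provable in the full logic FR = F + (A∧(A→B)→B); that is, FR_[→] axiomatizes the implicational fragment of FR. -/
import Mathlib


/-- Implicational formulas: built from propositional variables using only `→`. -/
inductive Fm : Type
  | var : ℕ → Fm
  | imp : Fm → Fm → Fm

/-- `chain [A₁,…,Aₙ] E` is the formula `A₁→(A₂→(⋯→(Aₙ→E)⋯))` (and `E` when n = 0). -/
def chain : List Fm → Fm → Fm
  | [], E => E
  | A :: L, E => Fm.imp A (chain L E)

/-- Theorems of the Hilbert system `FR_[→]`: `F_[→]` extended with the rule `I_Refl`. -/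
inductive FRThm : Fm → Prop
  | id (A : Fm) : FRThm (A.imp A)
  | mp {A B : Fm} : FRThm A → FRThm (A.imp B) → FRThm B
  | afort {A : Fm} (B : Fm) : FRThm A → FRThm (B.imp A)
  | rule4 {L : List Fm} {B C D : Fm} :
      FRThm (chain L (B.imp C)) → FRThm (chain L (C.imp D)) →
      FRThm (chain L (B.imp D))
  | irefl {L : List Fm} {B C : Fm} :
      FRThm (chain L B) → FRThm (chain L (B.imp C)) → FRThm (chain L C)

/-- Derivations from assumptions in `FR_[→]`: members of `Γ` and theorems may be used;
rules (3) and (4) only apply to theorems; `I_Refl` is unrestricted (its case `n = 0`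
gives unrestricted modus ponens). -/
inductive FRDeriv (Γ : Set Fm) : Fm → Prop
  | hyp {A : Fm} : A ∈ Γ → FRDeriv Γ A
  | thm {A : Fm} : FRThm A → FRDeriv Γ A
  | irefl {L : List Fm} {B C : Fm} :
      FRDeriv Γ (chain L B) → FRDeriv Γ (chain L (B.imp C)) → FRDeriv Γ (chain L C)

/-- Formulas of the full propositional language with `∧`, `∨`, `→`. -/
inductive Pf : Type
  | var : ℕ → Pf
  | imp : Pf → Pf → Pf
  | and : Pf → Pf → Pf
  | or : Pf → Pf → Pf

/-- Theorems of the subintuitionistic logic `F`. -/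
inductive FfullThm : Pf → Prop
  | ax1 (A B : Pf) : FfullThm (A.imp (A.or B))
  | ax2 (A B : Pf) : FfullThm (B.imp (A.or B))
  | ax3 (A B : Pf) : FfullThm ((A.and B).imp A)
  | ax4 (A B : Pf) : FfullThm ((A.and B).imp B)
  | ax7 (A B C : Pf) : FfullThm ((A.and (B.or C)).imp ((A.and B).or (A.and C)))
  | ax8 (A B C : Pf) : FfullThm (((A.imp B).and (B.imp C)).imp (A.imp C))
  | ax9 (A B C : Pf) : FfullThm (((A.imp B).and (A.imp C)).imp (A.imp (B.and C)))
  | ax10 (A : Pf) : FfullThm (A.imp A)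
  | ax11 (A B C : Pf) : FfullThm (((A.imp C).and (B.imp C)).imp ((A.or B).imp C))
  | adj {A B : Pf} : FfullThm A → FfullThm B → FfullThm (A.and B)
  | mp {A B : Pf} : FfullThm A → FfullThm (A.imp B) → FfullThm B
  | afort {A : Pf} (B : Pf) : FfullThm A → FfullThm (B.imp A)

/-- The embedding of the implicational language into the full propositional language. -/
def emb : Fm → Pf
  | Fm.var p => Pf.var p
  | Fm.imp A B => (emb A).imp (emb B)

/-- Theorems of `FR = F + (A∧(A→B)→B)`. -/
inductive FRfullThm : Pf → Prop
  | ax1 (A B : Pf) : FRfullThm (A.imp (A.or B))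
  | ax2 (A B : Pf) : FRfullThm (B.imp (A.or B))
  | ax3 (A B : Pf) : FRfullThm ((A.and B).imp A)
  | ax4 (A B : Pf) : FRfullThm ((A.and B).imp B)
  | ax7 (A B C : Pf) : FRfullThm ((A.and (B.or C)).imp ((A.and B).or (A.and C)))
  | ax8 (A B C : Pf) : FRfullThm (((A.imp B).and (B.imp C)).imp (A.imp C))
  | ax9 (A B C : Pf) : FRfullThm (((A.imp B).and (A.imp C)).imp (A.imp (B.and C)))
  | ax10 (A : Pf) : FRfullThm (A.imp A)
  | ax11 (A B C : Pf) : FRfullThm (((A.imp C).and (B.imp C)).imp ((A.or B).imp C))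
  | adj {A B : Pf} : FRfullThm A → FRfullThm B → FRfullThm (A.and B)
  | mp {A B : Pf} : FRfullThm A → FRfullThm (A.imp B) → FRfullThm B
  | afort {A : Pf} (B : Pf) : FRfullThm A → FRfullThm (B.imp A)
  | axR (A B : Pf) : FRfullThm ((A.and (A.imp B)).imp B)

/- ## Auxiliary development -/

/-- Chains in the full language. -/
def chainP : List Pf → Pf → Pf
  | [], E => E
  | A :: L, E => Pf.imp A (chainP L E)

lemma emb_chain (L : List Fm) (E : Fm) :
    emb (chain L E) = chainP (L.map emb) (emb E) := by
  induction L with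
  | nil => rfl
  | cons A L ih => simp [chain, chainP, emb, ih]

namespace FRfullThm

lemma comp {X Y Z : Pf} (h1 : FRfullThm (X.imp Y)) (h2 : FRfullThm (Y.imp Z)) :
    FRfullThm (X.imp Z) :=
  mp (adj h1 h2) (ax8 X Y Z)

lemma imp_and {X Y Z : Pf} (h1 : FRfullThm (X.imp Y)) (h2 : FRfullThm (X.imp Z)) :
    FRfullThm (X.imp (Y.and Z)) :=
  mp (adj h1 h2) (ax9 X Y Z)

lemma mono {Y Z : Pf} (A : Pf) (h : FRfullThm (Y.imp Z)) :
    FRfullThm ((A.imp Y).imp (A.imp Z)) :=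
  comp (imp_and (ax10 (A.imp Y)) (afort _ h)) (ax8 A Y Z)

lemma chain_mono {Y Z : Pf} (M : List Pf) (h : FRfullThm (Y.imp Z)) :
    FRfullThm ((chainP M Y).imp (chainP M Z)) := by
  induction M with
  | nil => exact h
  | cons A M ih => exact mono A ih

lemma chain_and (M : List Pf) (Y Z : Pf) :
    FRfullThm (((chainP M Y).and (chainP M Z)).imp (chainP M (Y.and Z))) := by
  induction M with
  | nil => exact ax10 _
  | cons A M ih => exact comp (ax9 A (chainP M Y) (chainP M Z)) (mono A ih)

lemma chain_adj {M : List Pf} {Y Z : Pf}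
    (h1 : FRfullThm (chainP M Y)) (h2 : FRfullThm (chainP M Z)) :
    FRfullThm (chainP M (Y.and Z)) :=
  mp (adj h1 h2) (chain_and M Y Z)

lemma chain_rule4 {M : List Pf} {B C D : Pf}
    (h1 : FRfullThm (chainP M (B.imp C))) (h2 : FRfullThm (chainP M (C.imp D))) :
    FRfullThm (chainP M (B.imp D)) :=
  mp (chain_adj h1 h2) (chain_mono M (ax8 B C D))

lemma chain_irefl {M : List Pf} {B C : Pf}
    (h1 : FRfullThm (chainP M B)) (h2 : FRfullThm (chainP M (B.imp C))) :
    FRfullThm (chainP M C) :=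
  mp (chain_adj h1 h2) (chain_mono M (axR B C))

end FRfullThm

/-- Forward direction. -/
lemma frthm_to_full {A : Fm} (h : FRThm A) : FRfullThm (emb A) := by
  induction h with
  | id A => exact FRfullThm.ax10 _
  | mp _ _ ih1 ih2 => exact FRfullThm.mp ih1 ih2
  | afort B _ ih => exact FRfullThm.afort _ ih
  | rule4 _ _ ih1 ih2 =>
      rw [emb_chain] at *
      exact FRfullThm.chain_rule4 ih1 ih2
  | irefl _ _ ih1 ih2 =>
      rw [emb_chain] at *
      exact FRfullThm.chain_irefl ih1 ih2

/- ## Backward direction: semantics over lists of implicational formulas -/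

lemma chain_append (L M : List Fm) (E : Fm) :
    chain (L ++ M) E = chain L (chain M E) := by
  induction L with
  | nil => rfl
  | cons A L ih => simp [chain, ih]

lemma FRThm.lift (L : List Fm) {T : Fm} (h : FRThm T) : FRThm (chain L T) := by
  induction L with
  | nil => exact h
  | cons A L ih => exact FRThm.afort A ih

/-- Accessibility between worlds (lists of implicational formulas). -/
def Acc' (L L' : List Fm) : Prop :=
  ∀ C D : Fm, FRThm (chain L (C.imp D)) → FRThm (chain L' C) → FRThm (chain L' D)

lemma Acc'_refl (L : List Fm) : Acc' L L := fun _ _ h1 h2 => FRThm.irefl h2 h1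

/-- Valuation of full-language formulas at a world. -/
def val : Pf → List Fm → Prop
  | Pf.var p, L => FRThm (chain L (Fm.var p))
  | Pf.imp X Y, L => ∀ L', Acc' L L' → val X L' → val Y L'
  | Pf.and X Y, L => val X L ∧ val Y L
  | Pf.or X Y, L => val X L ∨ val Y L

lemma sound {P : Pf} (h : FRfullThm P) : ∀ L, val P L := by
  induction h with
  | ax1 A B => exact fun L L' _ hA => Or.inl hA
  | ax2 A B => exact fun L L' _ hB => Or.inr hB
  | ax3 A B => exact fun L L' _ hAB => hAB.1
  | ax4 A B => exact fun L L' _ hAB => hAB.2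
  | ax7 A B C =>
      intro L L' _ h
      exact h.2.elim (fun hB => Or.inl ⟨h.1, hB⟩) (fun hC => Or.inr ⟨h.1, hC⟩)
  | ax8 A B C => exact fun L L' _ h L'' hR hA => h.2 L'' hR (h.1 L'' hR hA)
  | ax9 A B C => exact fun L L' _ h L'' hR hA => ⟨h.1 L'' hR hA, h.2 L'' hR hA⟩
  | ax10 A => exact fun L L' _ hA => hA
  | ax11 A B C =>
      intro L L' _ h L'' hR hAB
      exact hAB.elim (fun hA => h.1 L'' hR hA) (fun hB => h.2 L'' hR hB)
  | adj _ _ ih1 ih2 => exact fun L => ⟨ih1 L, ih2 L⟩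
  | mp _ _ ih1 ih2 => exact fun L => ih2 L L (Acc'_refl L) (ih1 L)
  | afort B _ ih => exact fun L L' _ _ => ih L'
  | axR A B => exact fun L L' _ h => h.2 L' (Acc'_refl L') h.1

lemma truth (A : Fm) : ∀ L, val (emb A) L ↔ FRThm (chain L A) := by
  induction A with
  | var p => intro L; exact Iff.rfl
  | imp A B ihA ihB =>
      intro L
      constructor
      · intro h
        have hR : Acc' L (L ++ [A]) := by
          intro C D h1 h2
          rw [chain_append] at h2 ⊢
          exact FRThm.rule4 h2 h1
        have hA : val (emb A) (L ++ [A]) := by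
          rw [ihA, chain_append]
          exact FRThm.lift L (FRThm.id A)
        have := (ihB (L ++ [A])).mp (h (L ++ [A]) hR hA)
        rwa [chain_append] at this
      · intro h L' hR hA
        exact (ihB L').mpr (hR A B h ((ihA L').mp hA))

/-- `FR_[→]` axiomatizes the implicational fragment of `FR`. -/
theorem implicational_fragment_FR (A : Fm) :
    FRThm A ↔ FRfullThm (emb A) := by
  constructor
  · exact frthm_to_full
  · intro h
    have := (truth A []).mp (sound h [])
    exact this
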